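/- arXiv:2112.02939 — 5 statements merged into one kernel-verified Lean document; each statement's English description precedes it below -/
import Mathlib

section
/- Let A : ℝ → Matrix(n×n, ℝ), M : ℝ → Matrix(n×k, ℝ), B : ℝ → ℝⁿ be continuous, θ_Γ ∈ ℝᵏ, and let x, ζ : ℝ → ℝⁿ, G : ℝ → Matrix(n×k, ℝ), Φ_A : ℝ → Matrix(n×n, ℝ) be differentiable with, for all t: x'(t) = A(t)·x(t) + M(t)·θ_Γ + B(t); ζ'(t) = A(t)·ζ(t) + B(t); G'(t) = A(t)·G(t) + M(t); Φ_A'(t) = A(t)·Φ_A(t), Φ_A(0) = I, and Φ_A(t) invertible for every t. Set θ_e := ζ(0) − x(0) + G(0)·θ_Γ. Then for all t ≥ 0: x(t) = ζ(t) − Φ_A(t)·θ_e + G(t)·θ_Γ. -/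
attribute [local instance] Matrix.normedAddCommGroup Matrix.normedSpace

lemma hasDerivAt_mulVec_const {n k : ℕ} {G : ℝ → Matrix (Fin n) (Fin k) ℝ}
    {G' : Matrix (Fin n) (Fin k) ℝ} {s : ℝ} (v : Fin k → ℝ)
    (h : HasDerivAt G G' s) :
    HasDerivAt (fun u => (G u).mulVec v) (G'.mulVec v) s := by
  let L : Matrix (Fin n) (Fin k) ℝ →ₗ[ℝ] (Fin n → ℝ) :=
    { toFun := fun N => N.mulVec v
      map_add' := fun N₁ N₂ => Matrix.add_mulVec _ _ _
      map_smul' := by intro c N; simp [Matrix.smul_mulVec] }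
  exact (L.toContinuousLinearMap.hasFDerivAt.comp_hasDerivAt s h)

lemma norm_mulVec_le {n : ℕ} (N : Matrix (Fin n) (Fin n) ℝ) (w : Fin n → ℝ) :
    ‖N.mulVec w‖ ≤ (n : ℝ) * ‖N‖ * ‖w‖ := by
  have hnn : (0 : ℝ) ≤ (n : ℝ) * ‖N‖ * ‖w‖ := by positivity
  rw [pi_norm_le_iff_of_nonneg hnn]
  intro i
  calc ‖N.mulVec w i‖ = ‖∑ j, N i j * w j‖ := by rfl
    _ ≤ ∑ j, ‖N i j * w j‖ := norm_sum_le _ _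
    _ ≤ ∑ _j : Fin n, ‖N‖ * ‖w‖ := by
        refine Finset.sum_le_sum fun j _ => ?_
        rw [norm_mul]
        exact mul_le_mul (Matrix.norm_entry_le_entrywise_sup_norm N)
          (norm_le_pi_norm w j) (norm_nonneg _) (norm_nonneg _)
    _ = (n : ℝ) * ‖N‖ * ‖w‖ := by
        simp [Finset.sum_const, mul_assoc]

/-- PEBO state representation: `x(t) = ζ(t) − Φ_A(t) θ_e + G(t) θ_Γ` with
`θ_e := ζ(0) − x(0) + G(0) θ_Γ`. -/
theorem pebo_state_representation
    (n k : ℕ) (hn : 0 < n) (hk : 0 < k)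
    (A : ℝ → Matrix (Fin n) (Fin n) ℝ) (M : ℝ → Matrix (Fin n) (Fin k) ℝ)
    (B : ℝ → Fin n → ℝ) (θΓ : Fin k → ℝ)
    (x ζ : ℝ → Fin n → ℝ) (G : ℝ → Matrix (Fin n) (Fin k) ℝ)
    (ΦA : ℝ → Matrix (Fin n) (Fin n) ℝ)
    (hA : Continuous A) (hM : Continuous M) (hB : Continuous B)
    (hx : ∀ t, HasDerivAt x ((A t).mulVec (x t) + (M t).mulVec θΓ + B t) t)
    (hζ : ∀ t, HasDerivAt ζ ((A t).mulVec (ζ t) + B t) t)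
    (hG : ∀ t, HasDerivAt G (A t * G t + M t) t)
    (hΦA : ∀ t, HasDerivAt ΦA (A t * ΦA t) t)
    (hΦA0 : ΦA 0 = 1)
    (hΦAinv : ∀ t, IsUnit (ΦA t))
    (θe : Fin n → ℝ)
    (hθe : θe = ζ 0 - x 0 + (G 0).mulVec θΓ) :
    ∀ t ≥ (0 : ℝ), x t = ζ t - (ΦA t).mulVec θe + (G t).mulVec θΓ := by
  intro t ht
  set e : ℝ → Fin n → ℝ :=
    fun s => ζ s + (G s).mulVec θΓ - x s - (ΦA s).mulVec θe with he_def
  -- e satisfies the homogeneous linear ODE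
  have he' : ∀ s, HasDerivAt e ((A s).mulVec (e s)) s := by
    intro s
    have h1 := ((hζ s).add (hasDerivAt_mulVec_const θΓ (hG s))).sub (hx s)
      |>.sub (hasDerivAt_mulVec_const θe (hΦA s))
    have key : (A s).mulVec (ζ s) + B s + (A s * G s + M s).mulVec θΓ -
        ((A s).mulVec (x s) + (M s).mulVec θΓ + B s) - (A s * ΦA s).mulVec θe
        = (A s).mulVec (e s) := by
      simp only [he_def, Matrix.add_mulVec, Matrix.mulVec_add, Matrix.mulVec_sub,
        ← Matrix.mulVec_mulVec]
      abel
    exact key ▸ h1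
  have he0 : e 0 = 0 := by
    simp only [he_def, hθe, hΦA0, Matrix.one_mulVec]
    abel
  -- Lipschitz bound on [0, t]
  obtain ⟨C, hC⟩ : ∃ C, ∀ s ∈ Set.Icc (0 : ℝ) t, ‖A s‖ ≤ C :=
    isCompact_Icc.exists_bound_of_continuousOn hA.continuousOn
  have hC0 : (0 : ℝ) ≤ C := le_trans (norm_nonneg _) (hC 0 ⟨le_rfl, ht⟩)
  set proj : ℝ → ℝ := fun s => min (max s 0) t with hproj_def
  have hproj_mem : ∀ s, proj s ∈ Set.Icc (0 : ℝ) t := fun s =>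
    ⟨le_min (le_max_right _ _) ht, min_le_right _ _⟩
  set v : ℝ → (Fin n → ℝ) → (Fin n → ℝ) := fun s y => (A (proj s)).mulVec y with hv_def
  set K : NNReal := Real.toNNReal ((n : ℝ) * C) with hK_def
  have hKC : ((n : ℝ) * C) ≤ (K : ℝ) := by
    rw [hK_def, Real.coe_toNNReal _ (by positivity)]
  have hv : ∀ s, LipschitzWith K (v s) := by
    intro s
    apply LipschitzWith.of_dist_le_mul
    intro y₁ y₂
    rw [dist_eq_norm, dist_eq_norm, hv_def]
    calc ‖(A (proj s)).mulVec y₁ - (A (proj s)).mulVec y₂‖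
        = ‖(A (proj s)).mulVec (y₁ - y₂)‖ := by rw [Matrix.mulVec_sub]
      _ ≤ (n : ℝ) * ‖A (proj s)‖ * ‖y₁ - y₂‖ := norm_mulVec_le _ _
      _ ≤ (n : ℝ) * C * ‖y₁ - y₂‖ := by
          gcongr
          exact hC _ (hproj_mem s)
      _ ≤ (K : ℝ) * ‖y₁ - y₂‖ := by gcongr
  -- uniqueness of ODE solutions: e ≡ 0 on [0, t]
  have heq : Set.EqOn e (fun _ => (0 : Fin n → ℝ)) (Set.Icc 0 t) := by
    apply ODE_solution_unique (v := v) hv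
    · exact fun s _ => (he' s).continuousAt.continuousWithinAt
    · intro s hs
      have hps : proj s = s := by
        rw [hproj_def]
        simp only [max_eq_left hs.1, min_eq_left hs.2.le]
      have h3 := (he' s).hasDerivWithinAt (s := Set.Ici s)
      show HasDerivWithinAt e ((A (proj s)).mulVec (e s)) (Set.Ici s) s
      rwa [hps]
    · exact continuousOn_const
    · intro s hs
      show HasDerivWithinAt (fun _ => (0:Fin n → ℝ)) ((A (proj s)).mulVec 0) (Set.Ici s) s
      rw [Matrix.mulVec_zero]
      exact hasDerivWithinAt_const _ _ _
    · exact he0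
  have het : e t = 0 := heq ⟨ht, le_rfl⟩
  have h2 : ζ t + (G t).mulVec θΓ - (ΦA t).mulVec θe - x t = 0 := by
    rw [← het, he_def]; abel
  rw [sub_eq_zero] at h2
  rw [← h2]; abel
end

section
/- Let N be a positive integer, θ ∈ ℝᴺ, λ > 0, and let Ψ : ℝ → Matrix(p×N, ℝ) and z : ℝ → ℝᵖ be continuous with z(t) = Ψ(t)·θ for all t ≥ 0. Let Y : ℝ → ℝᴺ and Ω : ℝ → Matrix(N×N, ℝ) be differentiable and satisfy Y'(t) = −λ·Y(t) + λ·Ψ(t)ᵀ·z(t), Ω'(t) = −λ·Ω(t) + λ·Ψ(t)ᵀ·Ψ(t) for all t ≥ 0, with initial conditions Y(0) = 0 and Ω(0) = 0. Then Y(t) = Ω(t)·θ for all t ≥ 0, and consequently adj(Ω(t))·Y(t) = det(Ω(t))·θ for all t ≥ 0, where adj denotes the adjugate matrix. -/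
attribute [local instance] Matrix.normedAddCommGroup Matrix.normedSpace

/-! `Y` and `Ω θ` solve the same linear ODE `ẋ = -λ x + λ Ψᵀ Ψ θ` from `0`, so they coincide by
uniqueness of solutions (Grönwall); `adj Ω * Ω = det Ω • 1` then gives the mixing step. -/

open Set Matrix

theorem eqOn_Ici_of_hasDerivAt_smul_add {E : Type*} [NormedAddCommGroup E] [NormedSpace ℝ E]
    {f g u : ℝ → E} {c a : ℝ}
    (hf : ∀ t ≥ a, HasDerivAt f (c • f t + u t) t)
    (hg : ∀ t ≥ a, HasDerivAt g (c • g t + u t) t) (ha : f a = g a) :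
    EqOn f g (Ici a) := fun t ht =>
  ODE_solution_unique_of_mem_Icc_right (v := fun s x => c • x + u s) (s := fun _ => univ)
    (K := ‖c‖₊) (fun s _ => by simpa using (lipschitzWith_smul c).add (.const (u s)))
    (fun s hs => (hf s hs.1).continuousAt.continuousWithinAt)
    (fun s hs => (hf s hs.1).hasDerivWithinAt) (fun _ _ => mem_univ _)
    (fun s hs => (hg s hs.1).continuousAt.continuousWithinAt)
    (fun s hs => (hg s hs.1).hasDerivWithinAt) (fun _ _ => mem_univ _)
    ha ⟨ht, le_rfl⟩

theorem HasDerivAt.matrix_mulVec_const {𝕜 m n : Type*} [NontriviallyNormedField 𝕜]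
    [CompleteSpace 𝕜] [Fintype m] [Fintype n] {M : 𝕜 → Matrix m n 𝕜} {M' : Matrix m n 𝕜} {t : 𝕜}
    (hM : HasDerivAt M M' t) (v : n → 𝕜) :
    HasDerivAt (fun s => M s *ᵥ v) (M' *ᵥ v) t := by
  exact (LinearMap.toContinuousLinearMap ((mulVecBilin 𝕜 𝕜).flip v)).hasFDerivAt
    |>.comp_hasDerivAt t hM

theorem drem_extension_and_mixing_general
    (N p : ℕ)
    (θ : Fin N → ℝ) (lam : ℝ)
    (Ψ : ℝ → Matrix (Fin p) (Fin N) ℝ) (z : ℝ → Fin p → ℝ)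
    (hreg : ∀ t ≥ (0 : ℝ), z t = (Ψ t).mulVec θ)
    (Y : ℝ → Fin N → ℝ) (Ω : ℝ → Matrix (Fin N) (Fin N) ℝ)
    (hY : ∀ t ≥ (0 : ℝ), HasDerivAt Y (-lam • Y t + lam • (Ψ t).transpose.mulVec (z t)) t)
    (hΩ : ∀ t ≥ (0 : ℝ), HasDerivAt Ω (-lam • Ω t + lam • ((Ψ t).transpose * Ψ t)) t)
    (hY0 : Y 0 = 0) (hΩ0 : Ω 0 = 0) :
    ∀ t ≥ (0 : ℝ),
      Y t = (Ω t).mulVec θ ∧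
      (Ω t).adjugate.mulVec (Y t) = (Ω t).det • θ := by
  have hΩθ : ∀ t ≥ (0 : ℝ), HasDerivAt (fun s => Ω s *ᵥ θ)
      (-lam • (Ω t *ᵥ θ) + lam • (Ψ t)ᵀ *ᵥ (Ψ t *ᵥ θ)) t := fun t ht => by
    simpa only [add_mulVec, smul_mulVec, mulVec_mulVec]
      using (hΩ t ht).matrix_mulVec_const θ
  have hYθ : ∀ t ≥ (0 : ℝ), HasDerivAt Y (-lam • Y t + lam • (Ψ t)ᵀ *ᵥ (Ψ t *ᵥ θ)) t :=
    fun t ht => hreg t ht ▸ hY t ht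
  have hextension : EqOn Y (fun s => Ω s *ᵥ θ) (Ici 0) :=
    eqOn_Ici_of_hasDerivAt_smul_add hYθ hΩθ (by simp [hY0, hΩ0])
  intro t ht
  refine ⟨hextension ht, ?_⟩
  rw [hextension ht, mulVec_mulVec, adjugate_mul, smul_mulVec, one_mulVec]

/-- DREM step: filtering the regression `z = Ψ θ` through `Ẏ = −λY + λΨᵀz`,
`Ω̇ = −λΩ + λΨᵀΨ` from zero initial conditions yields `Y = Ω θ`, and hence
`adj(Ω) Y = det(Ω) θ`. -/
theorem drem_extension_and_mixing
    (N p : ℕ) (hN : 0 < N) (hp : 0 < p)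
    (θ : Fin N → ℝ) (lam : ℝ) (hlam : 0 < lam)
    (Ψ : ℝ → Matrix (Fin p) (Fin N) ℝ) (z : ℝ → Fin p → ℝ)
    (hΨ : Continuous Ψ) (hz : Continuous z)
    (hreg : ∀ t ≥ (0 : ℝ), z t = (Ψ t).mulVec θ)
    (Y : ℝ → Fin N → ℝ) (Ω : ℝ → Matrix (Fin N) (Fin N) ℝ)
    (hY : ∀ t ≥ (0 : ℝ), HasDerivAt Y (-lam • Y t + lam • (Ψ t).transpose.mulVec (z t)) t)
    (hΩ : ∀ t ≥ (0 : ℝ), HasDerivAt Ω (-lam • Ω t + lam • ((Ψ t).transpose * Ψ t)) t)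
    (hY0 : Y 0 = 0) (hΩ0 : Ω 0 = 0) :
    ∀ t ≥ (0 : ℝ),
      Y t = (Ω t).mulVec θ ∧
      (Ω t).adjugate.mulVec (Y t) = (Ω t).det • θ :=
  drem_extension_and_mixing_general N p θ lam Ψ z hreg Y Ω hY hΩ hY0 hΩ0
end

section
/- Let N be a positive integer, θ ∈ ℝᴺ, γ > 0, μ ∈ (0,1), t_IE > 0, and let Δ : ℝ → ℝ be continuous with ∫₀^{t_IE} Δ(s)² ds ≥ −(1/γ)·ln(1−μ). Let θ̂ : ℝ → ℝᴺ be differentiable with θ̂'(t) = −γ·Δ(t)·(Δ(t)·θ̂(t) − Δ(t)·θ) for all t ≥ 0. Define w(t) := exp(−γ·∫₀ᵗ Δ(s)² ds), the clipped weight w_c(t) := if w(t) ≤ 1−μ then w(t) else 1−μ, and the fixed-convergence-time estimate θ^{FCT}(t) := (1/(1 − w_c(t)))·(θ̂(t) − w_c(t)·θ̂(0)). Then θ^{FCT}(t) = θ for all t ≥ t_IE. -/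
/-! Along the gradient estimator, `exp (γ ∫₀ᵗ Δ²) • (θ̂ t - θ)` has zero derivative, so
`θ̂ t - θ = w t • (θ̂ 0 - θ)`: the error decays by exactly the weight `w`. Hence
`θ = (θ̂ t - w t • θ̂ 0) / (1 - w t)` whenever `w t ≠ 1`. Interval excitation forces
`w t ≤ 1 - μ` for `t ≥ t_IE`, where the clipped weight coincides with `w` and the
division is legitimate. -/

open Real Set

theorem sub_eq_exp_smul_of_hasDerivAt_neg_smul_sub {E : Type*} [NormedAddCommGroup E]
    [NormedSpace ℝ E] {x : ℝ → E} {c : E} {P p : ℝ → ℝ}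
    (hP : ∀ u ≥ 0, HasDerivAt P (p u) u) (hx : ∀ u ≥ 0, HasDerivAt x (-p u • (x u - c)) u)
    {t : ℝ} (ht : 0 ≤ t) : x t - c = exp (P 0 - P t) • (x 0 - c) := by
  set g : ℝ → E := fun u => exp (P u) • (x u - c)
  have hg : ∀ u ≥ 0, HasDerivAt g 0 u := fun u hu => by
    refine (((hP u hu).exp).smul ((hx u hu).sub_const c)).congr_deriv ?_
    module
  have hconst : g t = g 0 :=
    constant_of_has_deriv_right_zero
      (fun u hu => (hg u hu.1).continuousAt.continuousWithinAt)
      (fun u hu => (hg u hu.1).hasDerivWithinAt) t ⟨ht, le_rfl⟩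
  calc x t - c = exp (-P t) • g t := by simp [g, smul_smul, ← exp_add]
    _ = exp (P 0 - P t) • (x 0 - c) := by
      rw [hconst]; simp only [g, smul_smul, ← exp_add]; ring_nf

theorem gradientEstimator_sub_eq {E : Type*} [NormedAddCommGroup E] [NormedSpace ℝ E]
    {γ : ℝ} {Δ : ℝ → ℝ} (hΔ : Continuous Δ) {θ : E} {θhat : ℝ → E}
    (hθhat : ∀ t ≥ (0 : ℝ), HasDerivAt θhat (-(γ * Δ t) • (Δ t • θhat t - Δ t • θ)) t)
    {t : ℝ} (ht : 0 ≤ t) :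
    θhat t - θ = exp (-γ * ∫ s in (0 : ℝ)..t, Δ s ^ 2) • (θhat 0 - θ) := by
  have hP : ∀ u ≥ (0 : ℝ), HasDerivAt (fun u => γ * ∫ s in (0 : ℝ)..u, Δ s ^ 2)
      (γ * Δ u ^ 2) u := fun u _ =>
    ((hΔ.pow 2).integral_hasStrictDerivAt 0 u).hasDerivAt.const_mul γ
  have hx : ∀ u ≥ (0 : ℝ), HasDerivAt θhat (-(γ * Δ u ^ 2) • (θhat u - θ)) u := fun u hu => by
    convert hθhat u hu using 1
    rw [← smul_sub, smul_smul]; ring_nf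
  rw [sub_eq_exp_smul_of_hasDerivAt_neg_smul_sub hP hx ht]
  simp

theorem exp_neg_mul_le_of_neg_inv_mul_log_le {γ a I : ℝ} (hγ : 0 < γ) (ha : 0 < a)
    (hI : -(1 / γ) * log a ≤ I) : exp (-γ * I) ≤ a := by
  rw [← exp_log ha, exp_le_exp]
  have := mul_le_mul_of_nonneg_left hI hγ.le
  rw [← mul_assoc, mul_neg, mul_one_div_cancel hγ.ne'] at this
  linarith

theorem one_div_one_sub_smul_sub_smul_eq {K V : Type*} [Field K] [AddCommGroup V] [Module K V]
    {x₀ x c : V} {w : K} (hw : w ≠ 1) (hx : x - c = w • (x₀ - c)) :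
    (1 / (1 - w)) • (x - w • x₀) = c := by
  have hsub : x - w • x₀ = (1 - w) • c := by
    rw [sub_eq_iff_eq_add.mp hx]; module
  rw [hsub, smul_smul, one_div, inv_mul_cancel₀ (sub_ne_zero.mpr hw.symm), one_smul]

theorem fixed_time_parameter_identification_general
    (N : ℕ)
    (θ : Fin N → ℝ) (γ μ : ℝ) (hγ : 0 < γ) (hμ : μ ∈ Set.Ioo (0 : ℝ) 1)
    (tIE : ℝ) (htIE : 0 < tIE)
    (Δ : ℝ → ℝ) (hΔ : Continuous Δ)
    (hIE : (∫ s in (0:ℝ)..tIE, (Δ s) ^ 2) ≥ -(1 / γ) * Real.log (1 - μ))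
    (θhat : ℝ → Fin N → ℝ)
    (hθhat : ∀ t ≥ (0 : ℝ),
      HasDerivAt θhat (-(γ * Δ t) • (Δ t • θhat t - Δ t • θ)) t)
    (w wc : ℝ → ℝ)
    (hw : ∀ t, w t = Real.exp (-γ * ∫ s in (0:ℝ)..t, (Δ s) ^ 2))
    (hwc : ∀ t, wc t = if w t ≤ 1 - μ then w t else 1 - μ)
    (θFCT : ℝ → Fin N → ℝ)
    (hθFCT : ∀ t, θFCT t = (1 / (1 - wc t)) • (θhat t - wc t • θhat 0)) :
    ∀ t ≥ tIE, θFCT t = θ := by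
  intro t ht
  have ht0 : 0 ≤ t := htIE.le.trans ht
  have hexcited : -(1 / γ) * log (1 - μ) ≤ ∫ s in (0 : ℝ)..t, Δ s ^ 2 :=
    hIE.le.trans <| intervalIntegral.integral_mono_interval le_rfl htIE.le ht
      (Filter.Eventually.of_forall fun s => sq_nonneg (Δ s))
      ((hΔ.pow 2).intervalIntegrable 0 t)
  have hwt : w t ≤ 1 - μ := by
    rw [hw t]; exact exp_neg_mul_le_of_neg_inv_mul_log_le hγ (by linarith [hμ.2]) hexcited
  have hwc_t : wc t = w t := by rw [hwc t, if_pos hwt]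
  rw [hθFCT t, hwc_t]
  refine one_div_one_sub_smul_sub_smul_eq (by linarith [hμ.1]) ?_
  rw [hw t]
  exact gradientEstimator_sub_eq hΔ hθhat ht0

/-- Fixed-time parameter identification: the clipped FCT estimate
`θ^{FCT}(t) = (θ̂(t) − w_c(t) θ̂(0)) / (1 − w_c(t))` built from the gradient estimator
`θ̂' = −γ Δ (Δ θ̂ − Δ θ)` equals the true parameter `θ` for all `t ≥ t_IE`,
provided the interval-excitation condition `∫₀^{t_IE} Δ² ≥ −ln(1−μ)/γ` holds. -/
theorem fixed_time_parameter_identification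
    (N : ℕ) (hN : 0 < N)
    (θ : Fin N → ℝ) (γ μ : ℝ) (hγ : 0 < γ) (hμ : μ ∈ Set.Ioo (0 : ℝ) 1)
    (tIE : ℝ) (htIE : 0 < tIE)
    (Δ : ℝ → ℝ) (hΔ : Continuous Δ)
    (hIE : (∫ s in (0:ℝ)..tIE, (Δ s) ^ 2) ≥ -(1 / γ) * Real.log (1 - μ))
    (θhat : ℝ → Fin N → ℝ)
    (hθhat : ∀ t ≥ (0 : ℝ),
      HasDerivAt θhat (-(γ * Δ t) • (Δ t • θhat t - Δ t • θ)) t)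
    (w wc : ℝ → ℝ)
    (hw : ∀ t, w t = Real.exp (-γ * ∫ s in (0:ℝ)..t, (Δ s) ^ 2))
    (hwc : ∀ t, wc t = if w t ≤ 1 - μ then w t else 1 - μ)
    (θFCT : ℝ → Fin N → ℝ)
    (hθFCT : ∀ t, θFCT t = (1 / (1 - wc t)) • (θhat t - wc t • θhat 0)) :
    ∀ t ≥ tIE, θFCT t = θ :=
  fixed_time_parameter_identification_general N θ γ μ hγ hμ tIE htIE Δ hΔ hIE θhat hθhat w wc hw hwc
    θFCT hθFCT
end

section
/- Let n, k, p be positive integers and N := n + k. Let A : ℝ → Matrix(n×n, ℝ), M : ℝ → Matrix(n×k, ℝ), B : ℝ → ℝⁿ, C : ℝ → Matrix(p×n, ℝ) be continuous, θ_Γ ∈ ℝᵏ, and let φ : ℝ → ℝ be continuous with φ(t) ≥ 0 for all t ≥ 0. Suppose: (i) x, ζ : ℝ → ℝⁿ, G : ℝ → Matrix(n×k, ℝ), Φ_A : ℝ → Matrix(n×n, ℝ) are differentiable with x'(t) = A(t)·x(t) + M(t)·θ_Γ + B(t), ζ'(t) = A(t)·ζ(t) + B(t), G'(t) = A(t)·G(t)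 + M(t), Φ_A'(t) = A(t)·Φ_A(t), Φ_A(0) = I, and Φ_A(t) invertible for all t; (ii) y(t) := C(φ(t))·x(φ(t)), z(t) := C(φ(t))·ζ(φ(t)) − y(t), Ψ(t) := C(φ(t))·[Φ_A(φ(t)) | −G(φ(t))]; (iii) λ > 0 and Y : ℝ → ℝᴺ, Ω : ℝ → Matrix(N×N, ℝ) are differentiable with Y'(t) = −λ·Y(t) + λ·Ψ(t)ᵀ·z(t), Ω'(t) = −λ·Ω(t) + λ·Ψ(t)ᵀ·Ψ(t), Y(0) = 0, Ω(0) = 0; set 𝒴(t) := adj(Ω(t))·Y(t), Δ(t) := det(Ω(t)); (iv) γ > 0 and θ̂ : ℝ → ℝᴺ is differentiable with θ̂'(t) = −γ·Δ(t)·(Δ(t)·θ̂(t) − 𝒴(t)); (v) μ ∈ (0,1), w(t) := exp(−γ·∫₀ᵗ Δ(s)² ds), w_c(t) := if w(t) ≤ 1−μ then w(t) else 1−μ, θ^{FCT}(t) := (1/(1−w_c(t)))·(θ̂(t) − w_c(t)·θ̂(0)); (vi) there exists t_IE > 0 with ∫₀^{t_IE} Δ(s)² ds ≥ −(1/γ)·ln(1−μ).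 Define the state estimate x̂(t) := ζ(t) − [Φ_A(t) | −G(t)]·θ^{FCT}(t). Then x̂(t) = x(t) for all t ≥ t_IE. -/
attribute [local instance] Matrix.normedAddCommGroup Matrix.normedSpace

section aux
variable {E : Type*} [NormedAddCommGroup E] [NormedSpace ℝ E]

variable {E : Type*} [NormedAddCommGroup E] [NormedSpace ℝ E]

lemma integrating_factor (g : ℝ → ℝ) (hg : Continuous g) (v : ℝ → E)
    (hv : ∀ s, 0 ≤ s → HasDerivAt v (g s • v s) s) {t : ℝ} (ht : 0 ≤ t) :
    v t = Real.exp (∫ s in (0:ℝ)..t, g s) • v 0 := by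
  set I : ℝ → ℝ := fun s => ∫ u in (0:ℝ)..s, g u with hI
  have hI' : ∀ s, HasDerivAt I (g s) s := fun s =>
    (hg.integral_hasStrictDerivAt 0 s).hasDerivAt
  set u : ℝ → E := fun s => Real.exp (-I s) • v s with hu
  have hu' : ∀ s, 0 ≤ s → HasDerivAt u 0 s := by
    intro s hs
    have hc : HasDerivAt (fun s => Real.exp (-I s)) (Real.exp (-I s) * (-g s)) s :=
      ((hI' s).neg).exp
    have := hc.smul (hv s hs)
    refine (this : HasDerivAt u _ s).congr_deriv ?_
    rw [smul_smul, ← add_smul]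
    have : Real.exp (-I s) * g s + Real.exp (-I s) * -g s = 0 := by ring
    rw [this, zero_smul]
  have key : u t = u 0 := by
    have := constant_of_has_deriv_right_zero
      (f := u) (a := 0) (b := t)
      (fun s hs => (hu' s hs.1).continuousAt.continuousWithinAt)
      (fun s hs => (hu' s hs.1).hasDerivWithinAt)
    exact this t ⟨ht, le_refl t⟩
  have hu0 : u 0 = v 0 := by
    simp [hu, hI, intervalIntegral.integral_same]
  rw [hu0] at key  -- key : exp(-I t) • v t = v 0
  have : Real.exp (I t) • u t = v t := by
    rw [hu, smul_smul, ← Real.exp_add]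
    simp
  rw [← this, key]
end aux


lemma hasDerivAt_mulVec_const_s9 {m l : Type*} [Fintype m] [Fintype l]
    {M : ℝ → Matrix m l ℝ}
    {M' : Matrix m l ℝ} {v : l → ℝ} {t : ℝ}
    (h : HasDerivAt M M' t) :
    HasDerivAt (fun s => (M s).mulVec v) (M'.mulVec v) t := by
  let L : Matrix m l ℝ →ₗ[ℝ] (m → ℝ) :=
    { toFun := fun N => N.mulVec v
      map_add' := fun a b => Matrix.add_mulVec a b v
      map_smul' := fun c a => Matrix.smul_mulVec c a v }
  exact (LinearMap.toContinuousLinearMap L).hasFDerivAt.comp_hasDerivAt t h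


lemma norm_mulVec_le' {m l : ℕ} (A : Matrix (Fin m) (Fin l) ℝ) (w : Fin l → ℝ) :
    ‖A.mulVec w‖ ≤ (l * ‖A‖) * ‖w‖ := by
  have hnn : (0:ℝ) ≤ (l * ‖A‖) * ‖w‖ := by positivity
  rw [pi_norm_le_iff_of_nonneg hnn]
  intro i
  calc ‖A.mulVec w i‖ = ‖∑ j, A i j * w j‖ := by rfl
    _ ≤ ∑ j, ‖A i j * w j‖ := norm_sum_le _ _
    _ ≤ ∑ _j : Fin l, ‖A‖ * ‖w‖ := by
        apply Finset.sum_le_sum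
        intro j _
        rw [norm_mul]
        exact mul_le_mul (A.norm_entry_le_entrywise_sup_norm)
          (norm_le_pi_norm w j) (norm_nonneg _) (norm_nonneg _)
    _ = (l * ‖A‖) * ‖w‖ := by simp [Finset.sum_const]; ring

lemma linear_ode_eq_zero {n' : ℕ} {A : ℝ → Matrix (Fin n') (Fin n') ℝ} (hA : Continuous A)
    {v : ℝ → Fin n' → ℝ} (hv : ∀ s, HasDerivAt v ((A s).mulVec (v s)) s)
    (hv0 : v 0 = 0) {t : ℝ} (ht : 0 ≤ t) : v t = 0 := by
  obtain ⟨C, hC⟩ := (isCompact_Icc (a := (0:ℝ)) (b := t)).exists_bound_of_continuousOn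
    hA.continuousOn
  set V : ℝ → (Fin n' → ℝ) → (Fin n' → ℝ) :=
    fun s x => (A (min (max s 0) t)).mulVec x with hV
  have hmem : ∀ s : ℝ, min (max s 0) t ∈ Set.Icc (0:ℝ) t := by
    intro s
    constructor
    · exact le_min (le_max_right _ _) ht
    · exact min_le_right _ _
  have hVlip : ∀ s, LipschitzWith (Real.toNNReal (n' * C)) (V s) := by
    intro s
    apply LipschitzWith.of_dist_le_mul
    intro x y
    rw [dist_eq_norm, dist_eq_norm]
    have : V s x - V s y = (A (min (max s 0) t)).mulVec (x - y) := by
      rw [Matrix.mulVec_sub]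
    rw [this]
    calc ‖(A (min (max s 0) t)).mulVec (x - y)‖
        ≤ (n' * ‖A (min (max s 0) t)‖) * ‖x - y‖ := norm_mulVec_le' _ _
      _ ≤ Real.toNNReal (n' * C) * ‖x - y‖ := by
          apply mul_le_mul_of_nonneg_right _ (norm_nonneg _)
          have h1 : ‖A (min (max s 0) t)‖ ≤ C := hC _ (hmem s)
          have : (n' : ℝ) * ‖A (min (max s 0) t)‖ ≤ n' * C :=
            mul_le_mul_of_nonneg_left h1 (Nat.cast_nonneg _)
          exact this.trans (Real.le_coe_toNNReal _)
  have key := ODE_solution_unique (v := V) hVlip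
    (f := v) (g := fun _ => (0 : Fin n' → ℝ)) (a := 0) (b := t)
    (fun s hs => (hv s).continuousAt.continuousWithinAt)
    (fun s hs => by
      have hmin : min (max s 0) t = s := by
        rw [max_eq_left hs.1, min_eq_left hs.2.le]
      have := (hv s).hasDerivWithinAt (s := Set.Ici s)
      simpa [hV, hmin] using this)
    continuousOn_const
    (fun s hs => by
      have : V s 0 = 0 := by simp [hV, Matrix.mulVec_zero]
      simpa [this] using (hasDerivWithinAt_const s (Set.Ici s) (0 : Fin n' → ℝ)))
    (by simpa using hv0)
  exact key ⟨ht, le_refl t⟩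

/-- Main Proposition (state part): the generalized PEBO+DREM observer with the
fixed-convergence-time estimate `θ^{FCT}` reconstructs the state of the LTV system
`ẋ = A(t)x + M(t)θ_Γ + B(t)` with delayed output `y(t) = C(φ(t))x(φ(t))` exactly,
for all `t ≥ t_IE`, under the interval-excitation condition on `Δ = det Ω`. -/
theorem pebo_drem_fixed_time_state_observation
    (n k p : ℕ) (hn : 0 < n) (hk : 0 < k) (hp : 0 < p)
    (A : ℝ → Matrix (Fin n) (Fin n) ℝ) (M : ℝ → Matrix (Fin n) (Fin k) ℝ)
    (B : ℝ → Fin n → ℝ) (C : ℝ → Matrix (Fin p) (Fin n) ℝ)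
    (θΓ : Fin k → ℝ) (φ : ℝ → ℝ)
    (hA : Continuous A) (hM : Continuous M) (hB : Continuous B)
    (hC : Continuous C) (hφ : Continuous φ) (hφ0 : ∀ t ≥ (0 : ℝ), 0 ≤ φ t)
    -- (i) plant and observer filters
    (x ζ : ℝ → Fin n → ℝ) (G : ℝ → Matrix (Fin n) (Fin k) ℝ)
    (ΦA : ℝ → Matrix (Fin n) (Fin n) ℝ)
    (hx : ∀ t, HasDerivAt x ((A t).mulVec (x t) + (M t).mulVec θΓ + B t) t)
    (hζ : ∀ t, HasDerivAt ζ ((A t).mulVec (ζ t) + B t) t)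
    (hG : ∀ t, HasDerivAt G (A t * G t + M t) t)
    (hΦA : ∀ t, HasDerivAt ΦA (A t * ΦA t) t)
    (hΦA0 : ΦA 0 = 1) (hΦAinv : ∀ t, IsUnit (ΦA t))
    -- (ii) delayed output and regressor
    (y z : ℝ → Fin p → ℝ) (Ψ : ℝ → Matrix (Fin p) (Fin n ⊕ Fin k) ℝ)
    (hy : ∀ t, y t = (C (φ t)).mulVec (x (φ t)))
    (hz : ∀ t, z t = (C (φ t)).mulVec (ζ (φ t)) - y t)
    (hΨ : ∀ t, Ψ t = C (φ t) * Matrix.fromCols (ΦA (φ t)) (-(G (φ t))))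
    -- (iii) DREM filters
    (lam : ℝ) (hlam : 0 < lam)
    (Y : ℝ → (Fin n ⊕ Fin k) → ℝ)
    (Ω : ℝ → Matrix (Fin n ⊕ Fin k) (Fin n ⊕ Fin k) ℝ)
    (hY : ∀ t, HasDerivAt Y (-lam • Y t + lam • (Ψ t).transpose.mulVec (z t)) t)
    (hΩ : ∀ t, HasDerivAt Ω (-lam • Ω t + lam • ((Ψ t).transpose * Ψ t)) t)
    (hY0 : Y 0 = 0) (hΩ0 : Ω 0 = 0)
    (calY : ℝ → (Fin n ⊕ Fin k) → ℝ) (Δ : ℝ → ℝ)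
    (hcalY : ∀ t, calY t = (Ω t).adjugate.mulVec (Y t))
    (hΔ : ∀ t, Δ t = (Ω t).det)
    -- (iv) gradient estimator
    (γ : ℝ) (hγ : 0 < γ)
    (θhat : ℝ → (Fin n ⊕ Fin k) → ℝ)
    (hθhat : ∀ t, HasDerivAt θhat (-(γ * Δ t) • (Δ t • θhat t - calY t)) t)
    -- (v) clipped fixed-convergence-time estimate
    (μ : ℝ) (hμ : μ ∈ Set.Ioo (0 : ℝ) 1)
    (w wc : ℝ → ℝ)
    (hw : ∀ t, w t = Real.exp (-γ * ∫ s in (0:ℝ)..t, (Δ s) ^ 2))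
    (hwc : ∀ t, wc t = if w t ≤ 1 - μ then w t else 1 - μ)
    (θFCT : ℝ → (Fin n ⊕ Fin k) → ℝ)
    (hθFCT : ∀ t, θFCT t = (1 / (1 - wc t)) • (θhat t - wc t • θhat 0))
    -- (vi) interval excitation
    (tIE : ℝ) (htIE : 0 < tIE)
    (hIE : (∫ s in (0:ℝ)..tIE, (Δ s) ^ 2) ≥ -(1 / γ) * Real.log (1 - μ))
    -- state estimate
    (xhat : ℝ → Fin n → ℝ)
    (hxhat : ∀ t, xhat t =
      ζ t - (Matrix.fromCols (ΦA t) (-(G t))).mulVec (θFCT t)) :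
    ∀ t ≥ tIE, xhat t = x t := by
  
  -- the concatenated unknown parameter
  set θe : Fin n → ℝ := ζ 0 - x 0 + (G 0).mulVec θΓ with hθe
  set θ : (Fin n ⊕ Fin k) → ℝ := Sum.elim θe θΓ with hθdef
  -- Step B : the PEBO identity
  have hstate : ∀ τ, 0 ≤ τ →
      ζ τ - x τ = (Matrix.fromCols (ΦA τ) (-(G τ))).mulVec θ := by
    intro τ hτ
    set D : ℝ → Fin n → ℝ :=
      fun s => ζ s - x s + (G s).mulVec θΓ - (ΦA s).mulVec θe with hD
    have hD' : ∀ s, HasDerivAt D ((A s).mulVec (D s)) s := by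
      intro s
      have h1 := (hζ s).sub (hx s)
      have h2 : HasDerivAt (fun u => (G u).mulVec θΓ)
          ((A s * G s + M s).mulVec θΓ) s := hasDerivAt_mulVec_const_s9 (hG s)
      have h3 : HasDerivAt (fun u => (ΦA u).mulVec θe)
          ((A s * ΦA s).mulVec θe) s := hasDerivAt_mulVec_const_s9 (hΦA s)
      have h4 := (h1.add h2).sub h3
      refine (h4 : HasDerivAt D _ s).congr_deriv ?_
      simp only [hD, Matrix.mulVec_sub, Matrix.mulVec_add, Matrix.add_mulVec,
        ← Matrix.mulVec_mulVec]
      abel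
    have hD0 : D 0 = 0 := by
      simp only [hD, hθe, hΦA0, Matrix.one_mulVec]
      abel
    have hDτ := linear_ode_eq_zero hA hD' hD0 hτ
    have : ζ τ - x τ = (ΦA τ).mulVec θe - (G τ).mulVec θΓ := by
      have h : ζ τ - x τ + (G τ).mulVec θΓ - (ΦA τ).mulVec θe = 0 := hDτ
      linear_combination h
    rw [this, hθdef, Matrix.fromCols_mulVec_sumElim, Matrix.neg_mulVec]
    abel
  -- the regression model z = Ψ θ
  have hzθ : ∀ s, 0 ≤ s → z s = (Ψ s).mulVec θ := by
    intro s hs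
    rw [hz, hy, hΨ, ← Matrix.mulVec_sub, hstate (φ s) (hφ0 s hs),
      Matrix.mulVec_mulVec]
  -- Step C : Y = Ω θ on [0, ∞)
  have hYΩ : ∀ τ, 0 ≤ τ → Y τ = (Ω τ).mulVec θ := by
    intro τ hτ
    set V : ℝ → (Fin n ⊕ Fin k) → ℝ := fun s => Y s - (Ω s).mulVec θ with hVd
    have hV' : ∀ s, 0 ≤ s → HasDerivAt V ((fun _ : ℝ => -lam) s • V s) s := by
      intro s hs
      have h2 : HasDerivAt (fun u => (Ω u).mulVec θ)
          ((-lam • Ω s + lam • ((Ψ s).transpose * Ψ s)).mulVec θ) s :=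
        hasDerivAt_mulVec_const_s9 (hΩ s)
      have h4 := (hY s).sub h2
      refine (h4 : HasDerivAt V _ s).congr_deriv ?_
      rw [hzθ s hs]
      simp only [hVd, Matrix.add_mulVec, Matrix.smul_mulVec,
        ← Matrix.mulVec_mulVec, smul_sub]
      abel
    have hint := integrating_factor (fun _ => -lam) continuous_const V hV' hτ
    have hV0 : V 0 = 0 := by simp [hVd, hY0, hΩ0]
    rw [hV0, smul_zero] at hint
    have := sub_eq_zero.mp hint
    exact sub_eq_zero.mp hint
  -- continuity of Δ
  have hΩcont : Continuous Ω := continuous_iff_continuousAt.mpr fun s => (hΩ s).continuousAt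
  have hΔcont : Continuous Δ := by
    have : Continuous fun s => (Ω s).det := hΩcont.matrix_det
    simpa [funext hΔ] using this
  -- Step E : the DREM/gradient estimator error
  have hg : Continuous fun s => -(γ * Δ s ^ 2) :=
    (continuous_const.mul (hΔcont.pow 2)).neg
  have hest : ∀ τ, 0 ≤ τ →
      θhat τ - θ = Real.exp (∫ s in (0:ℝ)..τ, -(γ * Δ s ^ 2)) • (θhat 0 - θ) := by
    intro τ hτ
    refine integrating_factor _ hg (fun s => θhat s - θ) ?_ hτ
    intro s hs
    have hcal : calY s = Δ s • θ := by
      rw [hcalY, hYΩ s hs, Matrix.mulVec_mulVec, Matrix.adjugate_mul, hΔ,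
        Matrix.smul_mulVec, Matrix.one_mulVec]
    have h1 := (hθhat s).sub_const θ
    convert h1 using 1
    rw [hcal, ← smul_sub, smul_smul]
    congr 1
    ring
  -- the weighting identity
  have hwid : ∀ τ, Real.exp (∫ s in (0:ℝ)..τ, -(γ * Δ s ^ 2)) = w τ := by
    intro τ
    rw [hw]
    congr 1
    rw [show (fun s => -(γ * Δ s ^ 2)) = fun s => (-γ) * (Δ s ^ 2) by funext s; ring]
    rw [intervalIntegral.integral_const_mul]
  -- positivity facts
  have h1μ : (0:ℝ) < 1 - μ := by linarith [hμ.2]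
  -- final argument
  intro t htt
  have ht0 : (0:ℝ) ≤ t := le_trans htIE.le htt
  have hii1 : IntervalIntegrable (fun s => Δ s ^ 2) MeasureTheory.volume 0 tIE :=
    ((hΔcont.pow 2).intervalIntegrable _ _)
  have hii2 : IntervalIntegrable (fun s => Δ s ^ 2) MeasureTheory.volume tIE t :=
    ((hΔcont.pow 2).intervalIntegrable _ _)
  have hmono : (∫ s in (0:ℝ)..tIE, Δ s ^ 2) ≤ ∫ s in (0:ℝ)..t, Δ s ^ 2 := by
    rw [← intervalIntegral.integral_add_adjacent_intervals hii1 hii2]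
    have h0 : (0:ℝ) ≤ ∫ s in tIE..t, Δ s ^ 2 :=
      intervalIntegral.integral_nonneg htt (fun s _ => sq_nonneg _)
    linarith
  have hIt : -(1 / γ) * Real.log (1 - μ) ≤ ∫ s in (0:ℝ)..t, Δ s ^ 2 :=
    le_trans hIE hmono
  have hwle : w t ≤ 1 - μ := by
    rw [hw]
    have hexp : -γ * (∫ s in (0:ℝ)..t, Δ s ^ 2) ≤ Real.log (1 - μ) := by
      have := mul_le_mul_of_nonpos_left hIt (by linarith : -γ ≤ 0)
      calc -γ * (∫ s in (0:ℝ)..t, Δ s ^ 2)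
          ≤ -γ * (-(1 / γ) * Real.log (1 - μ)) := this
        _ = Real.log (1 - μ) := by field_simp
    calc Real.exp (-γ * ∫ s in (0:ℝ)..t, Δ s ^ 2)
        ≤ Real.exp (Real.log (1 - μ)) := Real.exp_le_exp.mpr hexp
      _ = 1 - μ := Real.exp_log h1μ
  have hwct : wc t = w t := by rw [hwc]; simp [hwle]
  have h1w : 1 - w t ≠ 0 := by
    have h := hμ.1
    have h2 : 0 < 1 - w t := by linarith
    exact ne_of_gt h2
  have hθt : θhat t = θ + w t • (θhat 0 - θ) := by
    have := hest t ht0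
    rw [hwid t] at this
    have h2 : θhat t = θ + (θhat t - θ) := by abel
    rw [h2, this]
  have hθF : θFCT t = θ := by
    rw [hθFCT, hwct]
    have hkey : θhat t - w t • θhat 0 = (1 - w t) • θ := by
      rw [hθt]
      module
    rw [hkey, smul_smul, one_div, inv_mul_cancel₀ h1w, one_smul]
  rw [hxhat, hθF, ← hstate t ht0]
  abel
end

section
/- Under hypotheses (i)–(vi) of the Proposition's setting — A, M, B, C, φ continuous with φ ≥ 0; x, ζ, G, Φ_A solving x' = A x + M θ_Γ + B, ζ' = A ζ + B, G' = A G + M, Φ_A' = A Φ_A with Φ_A(0) = I and Φ_A(t) invertible; y(t) = C(φ(t))·x(φ(t)); Y, Ω solving the DREM filters Y' = −λY + λΨᵀz, Ω' = −λΩ + λΨᵀΨ from zero initial conditions with λ > 0, where z(t) = C(φ(t))ζ(φ(t)) − y(t) and Ψ(t) = C(φ(t))[Φ_A(φ(t)) | −G(φ(t))]; θ̂ solving the gradient estimator θ̂' = −γΔ(Δθ̂ − 𝒴) with γ > 0, 𝒴 = adj(Ω)Y, Δ = det(Ω); w(t) = exp(−γ∫₀ᵗΔ²), w_c the clip of w at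 1−μ with μ ∈ (0,1), θ^{FCT}(t) = (θ̂(t) − w_c(t)θ̂(0))/(1−w_c(t)); and the interval-excitation condition ∫₀^{t_IE}Δ² ≥ −(1/γ)ln(1−μ) — additionally let H : ℝ → Matrix(q×k, ℝ), Γ : ℝ → Matrix(k×k, ℝ) be continuous, Φ_Γ : ℝ → Matrix(k×k, ℝ) differentiable with Φ_Γ'(t) = Γ(t)·Φ_Γ(t), Φ_Γ(0) = I, and let η(t) := H(t)·Φ_Γ(t)·θ_Γ. Define the parameter estimate η̂(t) := H(t)·Φ_Γ(t)·(π_k(θ^{FCT}(t))), where π_k : ℝ^{n+k} → ℝᵏ extracts the last k components. Then η̂(t) = η(t) for all t ≥ t_IE. -/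
attribute [local instance] Matrix.normedAddCommGroup Matrix.normedSpace

open Matrix

open Matrix

section Helpers

variable {ι κ : Type*} [Fintype ι] [Fintype κ]

lemma pebo_entry_deriv {F : ℝ → Matrix ι κ ℝ} {F' : Matrix ι κ ℝ} {t : ℝ}
    (h : HasDerivAt F F' t) (i : ι) (j : κ) :
    HasDerivAt (fun s => F s i j) (F' i j) t :=
  hasDerivAt_pi.mp (hasDerivAt_pi.mp h i) j

lemma pebo_vec_entry_deriv {f : ℝ → ι → ℝ} {f' : ι → ℝ} {t : ℝ}
    (h : HasDerivAt f f' t) (i : ι) :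
    HasDerivAt (fun s => f s i) (f' i) t :=
  hasDerivAt_pi.mp h i

lemma pebo_hasDerivAt_mulVec {F : ℝ → Matrix ι κ ℝ} {F' : Matrix ι κ ℝ}
    {v : ℝ → κ → ℝ} {v' : κ → ℝ} {t : ℝ}
    (hF : ∀ i j, HasDerivAt (fun s => F s i j) (F' i j) t)
    (hv : ∀ j, HasDerivAt (fun s => v s j) (v' j) t) :
    HasDerivAt (fun s => (F s).mulVec (v s)) (F'.mulVec (v t) + (F t).mulVec v') t := by
  rw [hasDerivAt_pi]
  intro i
  have h1 : HasDerivAt (fun s => ∑ j, F s i j * v s j)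
      (∑ j, (F' i j * v t j + F t i j * v' j)) t :=
    HasDerivAt.fun_sum fun j _ => (hF i j).mul (hv j)
  have h2 : (F'.mulVec (v t) + (F t).mulVec v') i
      = ∑ j, (F' i j * v t j + F t i j * v' j) := by
    simp [Matrix.mulVec, dotProduct, Finset.sum_add_distrib]
  rw [h2]
  exact h1

lemma pebo_hasDerivAt_mulVec_const {F : ℝ → Matrix ι κ ℝ} {F' : Matrix ι κ ℝ}
    {t : ℝ} (hF : HasDerivAt F F' t) (v : κ → ℝ) :
    HasDerivAt (fun s => (F s).mulVec v) (F'.mulVec v) t := by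
  have := pebo_hasDerivAt_mulVec (v := fun _ => v) (v' := 0)
    (fun i j => pebo_entry_deriv hF i j) (fun j => hasDerivAt_const t (v j))
  simpa using this

variable {ρ : Type*} [Fintype ρ]

lemma pebo_hasDerivAt_matmul {P : ℝ → Matrix ι κ ℝ} {P' : Matrix ι κ ℝ}
    {Q : ℝ → Matrix κ ρ ℝ} {Q' : Matrix κ ρ ℝ} {t : ℝ}
    (hP : ∀ i j, HasDerivAt (fun s => P s i j) (P' i j) t)
    (hQ : ∀ i j, HasDerivAt (fun s => Q s i j) (Q' i j) t) :
    HasDerivAt (fun s => P s * Q s) (P' * Q t + P t * Q') t := by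
  refine hasDerivAt_pi.mpr ?_
  intro i
  refine hasDerivAt_pi.mpr ?_
  intro j
  have h1 : HasDerivAt (fun s => ∑ l, P s i l * Q s l j)
      (∑ l, (P' i l * Q t l j + P t i l * Q' l j)) t :=
    HasDerivAt.fun_sum fun l _ => (hP i l).mul (hQ l j)
  have h2 : (P' * Q t + P t * Q') i j
      = ∑ l, (P' i l * Q t l j + P t i l * Q' l j) := by
    simp [Matrix.mul_apply, Finset.sum_add_distrib]
  rw [h2]
  exact h1

variable [DecidableEq ι]

lemma pebo_differentiableAt_det {F : ℝ → Matrix ι ι ℝ} {t : ℝ}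
    (h : ∀ i j, DifferentiableAt ℝ (fun s => F s i j) t) :
    DifferentiableAt ℝ (fun s => (F s).det) t := by
  simp only [Matrix.det_apply']
  exact DifferentiableAt.fun_sum fun σ _ =>
    (DifferentiableAt.fun_finsetProd (fun i _ => h (σ i) i)).const_mul _

lemma pebo_differentiableAt_adjugate {F : ℝ → Matrix ι ι ℝ} {t : ℝ}
    (h : ∀ i j, DifferentiableAt ℝ (fun s => F s i j) t) (i j : ι) :
    DifferentiableAt ℝ (fun s => (F s).adjugate i j) t := by
  simp only [Matrix.adjugate_apply]
  apply pebo_differentiableAt_det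
  intro a b
  simp only [Matrix.updateRow_apply]
  by_cases hab : a = j
  · simp [hab]
  · simpa [hab] using h a b

end Helpers


/-- Main Proposition (parameter part): under the PEBO+DREM observer setting, the
estimate `η̂(t) = H(t)Φ_Γ(t)[0 | I_k]θ^{FCT}(t)` of the unknown time-varying parameter
`η(t) = H(t)Φ_Γ(t)θ_Γ` is exact for all `t ≥ t_IE`. -/
theorem pebo_drem_fixed_time_parameter_observation
    (n k p q : ℕ) (hn : 0 < n) (hk : 0 < k) (hp : 0 < p) (hq : 0 < q)
    (A : ℝ → Matrix (Fin n) (Fin n) ℝ) (M : ℝ → Matrix (Fin n) (Fin k) ℝ)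
    (B : ℝ → Fin n → ℝ) (C : ℝ → Matrix (Fin p) (Fin n) ℝ)
    (θΓ : Fin k → ℝ) (φ : ℝ → ℝ)
    (hA : Continuous A) (hM : Continuous M) (hB : Continuous B)
    (hC : Continuous C) (hφ : Continuous φ) (hφ0 : ∀ t ≥ (0 : ℝ), 0 ≤ φ t)
    -- (i) plant and observer filters
    (x ζ : ℝ → Fin n → ℝ) (G : ℝ → Matrix (Fin n) (Fin k) ℝ)
    (ΦA : ℝ → Matrix (Fin n) (Fin n) ℝ)
    (hx : ∀ t, HasDerivAt x ((A t).mulVec (x t) + (M t).mulVec θΓ + B t) t)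
    (hζ : ∀ t, HasDerivAt ζ ((A t).mulVec (ζ t) + B t) t)
    (hG : ∀ t, HasDerivAt G (A t * G t + M t) t)
    (hΦA : ∀ t, HasDerivAt ΦA (A t * ΦA t) t)
    (hΦA0 : ΦA 0 = 1) (hΦAinv : ∀ t, IsUnit (ΦA t))
    -- (ii) delayed output and regressor
    (y z : ℝ → Fin p → ℝ) (Ψ : ℝ → Matrix (Fin p) (Fin n ⊕ Fin k) ℝ)
    (hy : ∀ t, y t = (C (φ t)).mulVec (x (φ t)))
    (hz : ∀ t, z t = (C (φ t)).mulVec (ζ (φ t)) - y t)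
    (hΨ : ∀ t, Ψ t = C (φ t) * Matrix.fromCols (ΦA (φ t)) (-(G (φ t))))
    -- (iii) DREM filters
    (lam : ℝ) (hlam : 0 < lam)
    (Y : ℝ → (Fin n ⊕ Fin k) → ℝ)
    (Ω : ℝ → Matrix (Fin n ⊕ Fin k) (Fin n ⊕ Fin k) ℝ)
    (hY : ∀ t, HasDerivAt Y (-lam • Y t + lam • (Ψ t).transpose.mulVec (z t)) t)
    (hΩ : ∀ t, HasDerivAt Ω (-lam • Ω t + lam • ((Ψ t).transpose * Ψ t)) t)
    (hY0 : Y 0 = 0) (hΩ0 : Ω 0 = 0)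
    (calY : ℝ → (Fin n ⊕ Fin k) → ℝ) (Δ : ℝ → ℝ)
    (hcalY : ∀ t, calY t = (Ω t).adjugate.mulVec (Y t))
    (hΔ : ∀ t, Δ t = (Ω t).det)
    -- (iv) gradient estimator
    (γ : ℝ) (hγ : 0 < γ)
    (θhat : ℝ → (Fin n ⊕ Fin k) → ℝ)
    (hθhat : ∀ t, HasDerivAt θhat (-(γ * Δ t) • (Δ t • θhat t - calY t)) t)
    -- (v) clipped fixed-convergence-time estimate
    (μ : ℝ) (hμ : μ ∈ Set.Ioo (0 : ℝ) 1)
    (w wc : ℝ → ℝ)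
    (hw : ∀ t, w t = Real.exp (-γ * ∫ s in (0:ℝ)..t, (Δ s) ^ 2))
    (hwc : ∀ t, wc t = if w t ≤ 1 - μ then w t else 1 - μ)
    (θFCT : ℝ → (Fin n ⊕ Fin k) → ℝ)
    (hθFCT : ∀ t, θFCT t = (1 / (1 - wc t)) • (θhat t - wc t • θhat 0))
    -- (vi) interval excitation
    (tIE : ℝ) (htIE : 0 < tIE)
    (hIE : (∫ s in (0:ℝ)..tIE, (Δ s) ^ 2) ≥ -(1 / γ) * Real.log (1 - μ))
    -- exosystem generating the time-varying parameter η
    (H : ℝ → Matrix (Fin q) (Fin k) ℝ) (Γm : ℝ → Matrix (Fin k) (Fin k) ℝ)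
    (hH : Continuous H) (hΓm : Continuous Γm)
    (ΦΓ : ℝ → Matrix (Fin k) (Fin k) ℝ)
    (hΦΓ : ∀ t, HasDerivAt ΦΓ (Γm t * ΦΓ t) t)
    (hΦΓ0 : ΦΓ 0 = 1)
    (η : ℝ → Fin q → ℝ)
    (hη : ∀ t, η t = (H t).mulVec ((ΦΓ t).mulVec θΓ))
    -- parameter estimate from the last k components of θ^{FCT}
    (ηhat : ℝ → Fin q → ℝ)
    (hηhat : ∀ t, ηhat t =
      (H t).mulVec ((ΦΓ t).mulVec (fun j : Fin k => θFCT t (Sum.inr j)))) :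
    ∀ t ≥ tIE, ηhat t = η t := by
  classical
  set θe : Fin n → ℝ := ζ 0 - x 0 + (G 0).mulVec θΓ with hθedef
  set θv : (Fin n ⊕ Fin k) → ℝ := Sum.elim θe θΓ with hθvdef

  -- ===== Step 1: PEBO identity e(s) = ΦA(s) θe − G(s) θΓ =====
  have key_e : ∀ s, ζ s - x s = (ΦA s).mulVec θe - (G s).mulVec θΓ := by
    set N : ℝ → Matrix (Fin n) (Fin n) ℝ := fun s => (ΦA s)⁻¹ with hNdef
    have hdetU : ∀ s, IsUnit (ΦA s).det := fun s => (Matrix.isUnit_iff_isUnit_det _).mp (hΦAinv s)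
    have hNmul : ∀ s, N s * ΦA s = 1 := fun s => Matrix.nonsing_inv_mul _ (hdetU s)
    have hmulN : ∀ s, ΦA s * N s = 1 := fun s => Matrix.mul_nonsing_inv _ (hdetU s)
    have hNdiff : ∀ s (i j : Fin n), DifferentiableAt ℝ (fun u => N u i j) s := by
      intro s i j
      have hent : ∀ (a b : Fin n), DifferentiableAt ℝ (fun u => ΦA u a b) s :=
        fun a b => (pebo_entry_deriv (hΦA s) a b).differentiableAt
      have hdet : DifferentiableAt ℝ (fun u => (ΦA u).det) s := pebo_differentiableAt_det hent
      have heq : (fun u => N u i j) = fun u => ((ΦA u).det)⁻¹ * (ΦA u).adjugate i j := by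
        funext u
        rw [hNdef]
        simp only [Matrix.inv_def, Matrix.smul_apply, smul_eq_mul, Ring.inverse_eq_inv']
      rw [heq]
      exact (hdet.inv (hdetU s).ne_zero).mul (pebo_differentiableAt_adjugate hent i j)
    set N' : ℝ → Matrix (Fin n) (Fin n) ℝ := fun s i j => deriv (fun u => N u i j) s with hN'def
    have hN' : ∀ s (i j : Fin n), HasDerivAt (fun u => N u i j) (N' s i j) s :=
      fun s i j => (hNdiff s i j).hasDerivAt
    have hN'eq : ∀ s, N' s = -(N s * A s) := by
      intro s
      have hprod : HasDerivAt (fun u => N u * ΦA u) (N' s * ΦA s + N s * (A s * ΦA s)) s :=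
        pebo_hasDerivAt_matmul (hN' s) (fun i j => pebo_entry_deriv (hΦA s) i j)
      have hconst : (fun u => N u * ΦA u) = fun _ => (1 : Matrix (Fin n) (Fin n) ℝ) := by
        funext u; exact hNmul u
      rw [hconst] at hprod
      have hzero : N' s * ΦA s + N s * (A s * ΦA s) = 0 :=
        hprod.unique (hasDerivAt_const s 1)
      have h1 : N' s * ΦA s = -(N s * (A s * ΦA s)) :=
        eq_neg_of_add_eq_zero_left hzero
      calc N' s = N' s * (ΦA s * N s) := by rw [hmulN s, mul_one]
        _ = (N' s * ΦA s) * N s := by rw [mul_assoc]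
        _ = -(N s * (A s * ΦA s)) * N s := by rw [h1]
        _ = -(N s * A s) := by
            rw [neg_mul, mul_assoc, mul_assoc, hmulN s, mul_one]
    set d : ℝ → Fin n → ℝ :=
      fun s => ζ s - x s - ((ΦA s).mulVec θe - (G s).mulVec θΓ) with hddef
    have hd0 : d 0 = 0 := by
      rw [hddef]
      simp only [hΦA0, Matrix.one_mulVec, hθedef]
      abel
    have hd' : ∀ s, HasDerivAt d ((A s).mulVec (d s)) s := by
      intro s
      have h1 : HasDerivAt (fun u => ζ u - x u)
          (((A s).mulVec (ζ s) + B s) - ((A s).mulVec (x s) + (M s).mulVec θΓ + B s)) s :=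
        (hζ s).sub (hx s)
      have h2 : HasDerivAt (fun u => (ΦA u).mulVec θe - (G u).mulVec θΓ)
          ((A s * ΦA s).mulVec θe - (A s * G s + M s).mulVec θΓ) s :=
        (pebo_hasDerivAt_mulVec_const (hΦA s) θe).sub
          (pebo_hasDerivAt_mulVec_const (hG s) θΓ)
      have h3 := h1.sub h2
      refine h3.congr_deriv ?_
      symm
      rw [hddef]
      simp only [Matrix.mulVec_sub, ← Matrix.mulVec_mulVec, Matrix.add_mulVec]
      abel
    set c : ℝ → Fin n → ℝ := fun s => (N s).mulVec (d s) with hcdef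
    have hc' : ∀ s, HasDerivAt c 0 s := by
      intro s
      have := pebo_hasDerivAt_mulVec (hN' s) (pebo_vec_entry_deriv (hd' s))
      rw [hN'eq s] at this
      convert this using 1
      rw [Matrix.neg_mulVec, ← Matrix.mulVec_mulVec]
      abel
    have hcconst : ∀ s, c s = c 0 := by
      intro s
      exact is_const_of_deriv_eq_zero
        (fun u => (hc' u).differentiableAt) (fun u => (hc' u).deriv) s 0
    have hc0 : c 0 = 0 := by rw [hcdef]; simp [hd0]
    have hdzero : ∀ s, d s = 0 := by
      intro s
      have : (ΦA s).mulVec (c s) = 0 := by rw [hcconst s, hc0, Matrix.mulVec_zero]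
      rwa [hcdef, Matrix.mulVec_mulVec, hmulN s, Matrix.one_mulVec] at this
    intro s
    have := hdzero s
    rw [hddef] at this
    rw [← sub_eq_zero]
    exact this

  -- ===== Step 2: linear regression z = Ψ θv =====
  have key_z : ∀ s, z s = (Ψ s).mulVec θv := by
    intro s
    rw [hz s, hy s, hΨ s, ← Matrix.mulVec_mulVec, hθvdef,
      Matrix.fromCols_mulVec_sumElim, ← Matrix.mulVec_sub, key_e (φ s),
      Matrix.neg_mulVec, sub_eq_add_neg]
  -- ===== Step 3: Y = Ω θv =====
  have key_Y : ∀ s, Y s = (Ω s).mulVec θv := by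
    set v : ℝ → (Fin n ⊕ Fin k) → ℝ := fun s => Y s - (Ω s).mulVec θv with hvdef
    have hv' : ∀ s, HasDerivAt v ((-lam) • v s) s := by
      intro s
      have h2 : HasDerivAt (fun u => (Ω u).mulVec θv)
          ((-lam • Ω s + lam • ((Ψ s).transpose * Ψ s)).mulVec θv) s :=
        pebo_hasDerivAt_mulVec_const (hΩ s) θv
      have h3 := (hY s).sub h2
      refine h3.congr_deriv ?_
      symm
      rw [hvdef]
      simp only [key_z s, Matrix.add_mulVec, Matrix.smul_mulVec,
        Matrix.mulVec_mulVec, smul_sub]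
      abel
    have hu : ∀ s, HasDerivAt (fun u => Real.exp (lam * u) • v u) 0 s := by
      intro s
      have he : HasDerivAt (fun u => Real.exp (lam * u)) (lam * Real.exp (lam * s)) s := by
        have := (Real.hasDerivAt_exp (lam * s)).comp s ((hasDerivAt_id s).const_mul lam)
        have := ((hasDerivAt_id s).const_mul lam).exp
        simp only [id_eq, mul_one] at this
        exact this.congr_deriv (mul_comm _ _)
      have h4 := he.smul (hv' s)
      refine h4.congr_deriv ?_
      symm
      rw [smul_smul, ← add_smul,
        show Real.exp (lam * s) * -lam + lam * Real.exp (lam * s) = 0 by ring, zero_smul]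
    have huconst : ∀ s, Real.exp (lam * s) • v s = Real.exp (lam * 0) • v 0 :=
      fun s => is_const_of_deriv_eq_zero
        (fun u => (hu u).differentiableAt) (fun u => (hu u).deriv) s 0
    have hv0 : v 0 = 0 := by
      rw [hvdef]; simp [hY0, hΩ0]
    intro s
    have h5 := huconst s
    rw [hv0, smul_zero] at h5
    have h6 : v s = 0 := by
      rcases smul_eq_zero.mp h5 with h | h
      · exact absurd h (Real.exp_ne_zero _)
      · exact h
    rw [hvdef] at h6
    rw [← sub_eq_zero]
    exact h6
  -- ===== Step 4: 𝒴 = Δ • θv and the θhat ODE =====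
  have key_calY : ∀ s, calY s = Δ s • θv := by
    intro s
    rw [hcalY s, key_Y s, Matrix.mulVec_mulVec, Matrix.adjugate_mul, hΔ s,
      Matrix.smul_mulVec, Matrix.one_mulVec]
  have hθ' : ∀ s, HasDerivAt θhat (-(γ * (Δ s) ^ 2) • (θhat s - θv)) s := by
    intro s
    have := hθhat s
    rw [key_calY s] at this
    convert this using 1
    rw [← smul_sub, smul_smul]
    congr 1
    ring
  -- ===== Step 5: continuity of Δ and derivative of the integral =====
  have hentry : ∀ i j, Continuous fun s => Ω s i j := fun i j =>
    continuous_iff_continuousAt.mpr fun s => (pebo_entry_deriv (hΩ s) i j).continuousAt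
  have hΔcont : Continuous Δ := by
    have hdet : Continuous fun s => (Ω s).det := by
      simp only [Matrix.det_apply']
      exact continuous_finset_sum _ fun σ _ =>
        continuous_const.mul (continuous_finset_prod _ fun i _ => hentry (σ i) i)
    have : Δ = fun s => (Ω s).det := funext hΔ
    rw [this]; exact hdet
  have hΔ2cont : Continuous fun s => (Δ s) ^ 2 := hΔcont.pow 2
  set I : ℝ → ℝ := fun u => ∫ r in (0:ℝ)..u, (Δ r) ^ 2 with hIdef
  have hI : ∀ s, HasDerivAt I ((Δ s) ^ 2) s := fun s =>
    (hΔ2cont.integral_hasStrictDerivAt 0 s).hasDerivAt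
  -- ===== Step 6: explicit solution of the estimator =====
  have key_θhat : ∀ s, θhat s - θv = Real.exp (-(γ * I s)) • (θhat 0 - θv) := by
    have hu : ∀ s, HasDerivAt (fun u => Real.exp (γ * I u) • (θhat u - θv)) 0 s := by
      intro s
      have hexp : HasDerivAt (fun u => Real.exp (γ * I u))
          (Real.exp (γ * I s) * (γ * (Δ s) ^ 2)) s := by
        have h1 : HasDerivAt (fun u => γ * I u) (γ * (Δ s) ^ 2) s := (hI s).const_mul γ
        exact (Real.hasDerivAt_exp (γ * I s)).comp s h1
      have hr : HasDerivAt (fun u => θhat u - θv) (-(γ * (Δ s) ^ 2) • (θhat s - θv)) s :=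
        (hθ' s).sub_const θv
      have h4 := hexp.smul hr
      refine h4.congr_deriv ?_
      symm
      rw [smul_smul, ← add_smul,
        show Real.exp (γ * I s) * -(γ * (Δ s) ^ 2)
          + Real.exp (γ * I s) * (γ * (Δ s) ^ 2) = 0 by ring, zero_smul]
    have huconst : ∀ s, Real.exp (γ * I s) • (θhat s - θv)
        = Real.exp (γ * I 0) • (θhat 0 - θv) :=
      fun s => is_const_of_deriv_eq_zero
        (fun u => (hu u).differentiableAt) (fun u => (hu u).deriv) s 0
    have hI0 : I 0 = 0 := intervalIntegral.integral_same
    intro s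
    have h5 := huconst s
    rw [hI0, mul_zero, Real.exp_zero, one_smul] at h5
    rw [← h5, smul_smul, ← Real.exp_add, neg_add_cancel, Real.exp_zero, one_smul]
  -- ===== Step 7: for t ≥ tIE, w(t) ≤ 1 − μ and θFCT(t) = θv =====
  intro t ht
  have hInt : ∀ a b : ℝ, IntervalIntegrable (fun r => (Δ r) ^ 2) MeasureTheory.volume a b :=
    fun a b => hΔ2cont.intervalIntegrable a b
  have hsplit : I t = (∫ r in (0:ℝ)..tIE, (Δ r) ^ 2) + ∫ r in tIE..t, (Δ r) ^ 2 :=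
    (intervalIntegral.integral_add_adjacent_intervals (hInt 0 tIE) (hInt tIE t)).symm
  have hnn : 0 ≤ ∫ r in tIE..t, (Δ r) ^ 2 :=
    intervalIntegral.integral_nonneg ht fun u _ => sq_nonneg _
  have hge : -(1 / γ) * Real.log (1 - μ) ≤ I t := by
    rw [hsplit]; linarith [hIE]
  have h1μ : (0:ℝ) < 1 - μ := by linarith [hμ.2]
  have hwle : w t ≤ 1 - μ := by
    rw [hw t]
    have hexp_le : -γ * I t ≤ Real.log (1 - μ) := by
      have h7 : γ * (-(1 / γ) * Real.log (1 - μ)) ≤ γ * I t :=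
        mul_le_mul_of_nonneg_left hge (le_of_lt hγ)
      have h8 : γ * (-(1 / γ) * Real.log (1 - μ)) = -Real.log (1 - μ) := by
        field_simp <;> ring
      linarith
    calc Real.exp (-γ * I t) ≤ Real.exp (Real.log (1 - μ)) := Real.exp_le_exp.mpr hexp_le
      _ = 1 - μ := Real.exp_log h1μ
  have hwct : wc t = w t := by rw [hwc t, if_pos hwle]
  have hw1 : 1 - w t ≠ 0 := by
    have : μ ≤ 1 - w t := by linarith
    have hμ0 := hμ.1
    linarith
  have hθFCTt : θFCT t = θv := by
    have hwt : w t = Real.exp (-(γ * I t)) := by rw [hw t, neg_mul]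
    have hrt : θhat t - θv = w t • (θhat 0 - θv) := by rw [hwt]; exact key_θhat t
    have hnum : θhat t - wc t • θhat 0 = (1 - w t) • θv := by
      rw [hwct]
      have hθt : θhat t = θv + w t • (θhat 0 - θv) := by
        rw [← hrt]; abel
      rw [hθt, smul_sub, sub_smul, one_smul]
      abel
    rw [hθFCT t, hnum, hwct, smul_smul, one_div, inv_mul_cancel₀ hw1, one_smul]
  -- ===== conclusion =====
  rw [hηhat t, hη t]
  congr 1
  congr 1
  funext j
  rw [hθFCTt, hθvdef]
  rfl
end
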